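/- Exact SetONet-Key branch realization of a stacked DeepONet: Let p, n, m, d_out ≥ 1, let c_i^k, ξ_{ij}^k, θ_i^k ∈ ℝ (1 ≤ k ≤ p, 1 ≤ i ≤ n, 1 ≤ j ≤ m), let ℓ : {1,…,p} → {1,…,d_out}, and let σ : ℝ → ℝ be any function. Suppose the pn row sums γ_i^k := Σ_{j=1}^m ξ_{ij}^k are pairwise distinct over pairs (k,i). For g = (g_1,…,g_m) ∈ ℝ^m define token rows P_{(k,i)}(g) := ( Σ_{j=1}^m ξ_{ij}^k g_j , γ_i^k ) ∈ ℝ², define the readout ρ : ℝ² → ℝ^{d_out} by ρ(s, c) = Σ_{(k',i')} L_{(k',i')}(c) σ(s + θ_{i'}^{k'}) e_{ℓ(k')}, where L_{(k',i')} are the Lagrange basis polynomials associated with the pairwise distinct codes (γ_{i'}^{k'}), and define branch coefficients b_k(g) := Σ_{i=1}^n c_i^k ρ(P_{(k,i)}(g)) ∈ ℝ^{d_out}. Then for every g ∈ ℝ^m and every k, b_k(g) = β_k(g) e_{ℓ(k)}, where β_k(g) = Σ_{i=1}^n c_i^k σ( Σ_{j=1}^m ξ_{ij}^k g_j + θ_i^k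 ). Consequently, for any w_k ∈ ℝ^{d_y}, ζ_k ∈ ℝ and any y ∈ ℝ^{d_y}, Σ_{k=1}^p b_k(g) ⊙ ( σ(w_k·y + ζ_k) e_{ℓ(k)} ) = Σ_{k=1}^p β_k(g) σ(w_k·y + ζ_k) e_{ℓ(k)}, where ⊙ is the elementwise product on ℝ^{d_out}. -/
import Mathlib


/-- Exact SetONet-Key branch realization of a stacked DeepONet.
Let `p, n, m, d_out ≥ 1`, coefficients `c k i`, `ξ k i j`, `θ k i ∈ ℝ`, a component
assignment `ℓ : Fin p → Fin d_out`, and an arbitrary `σ : ℝ → ℝ`.  Suppose the `p·n`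
row sums `γ k i := ∑ j, ξ k i j` are pairwise distinct over pairs `(k, i)`.  For
`g ∈ ℝ^m` the token rows are `P (k,i) g := (∑ j, ξ k i j * g j, γ k i) ∈ ℝ²`, the
readout is `ρ (s, c₀) = ∑_{(k',i')} L (k',i') c₀ • (σ (s + θ k' i') · e_{ℓ k'})` with
the Lagrange basis polynomials `L` associated with the codes `γ`, and the branch
coefficients are `bcoef g k := ∑ i, c k i • ρ (P (k,i) g)`.  Then
`bcoef g k = β g k • e_{ℓ k}` where `β g k = ∑ i, c k i * σ (∑ j, ξ k i j * g j + θ k i)`,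
and consequently for any `w k ∈ ℝ^{d_y}`, `ζ k ∈ ℝ`, `y ∈ ℝ^{d_y}`,
`∑ k, bcoef g k ⊙ (σ (w k · y + ζ k) • e_{ℓ k}) = ∑ k, (β g k * σ (w k · y + ζ k)) • e_{ℓ k}`,
where `⊙` is the elementwise (Hadamard) product on `ℝ^{d_out}` (pointwise `*` on
`Fin d_out → ℝ`) and `e_r = Pi.single r 1`. -/
theorem setonet_key_branch_realizes_stacked_deeponet
    (p n m dout dy : ℕ) (hp : 1 ≤ p) (hn : 1 ≤ n) (hm : 1 ≤ m) (hdout : 1 ≤ dout)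
    (c : Fin p → Fin n → ℝ) (ξ : Fin p → Fin n → Fin m → ℝ) (θ : Fin p → Fin n → ℝ)
    (ℓ : Fin p → Fin dout) (σ : ℝ → ℝ)
    (γ : Fin p → Fin n → ℝ) (hγ : ∀ k i, γ k i = ∑ j, ξ k i j)
    (hdist : ∀ k i k' i', γ k i = γ k' i' → (k, i) = (k', i'))
    (L : Fin p × Fin n → ℝ → ℝ)
    (hL : ∀ a c₀, L a c₀ =
      ∏ b ∈ Finset.univ.erase a, (c₀ - γ b.1 b.2) / (γ a.1 a.2 - γ b.1 b.2))
    (ρ : ℝ → ℝ → Fin dout → ℝ)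
    (hρ : ∀ s c₀, ρ s c₀ =
      ∑ a : Fin p × Fin n,
        (L a c₀ * σ (s + θ a.1 a.2)) • (Pi.single (ℓ a.1) (1 : ℝ) : Fin dout → ℝ))
    (bcoef : (Fin m → ℝ) → Fin p → Fin dout → ℝ)
    (hb : ∀ g k, bcoef g k = ∑ i, c k i • ρ (∑ j, ξ k i j * g j) (γ k i))
    (β : (Fin m → ℝ) → Fin p → ℝ)
    (hβ : ∀ g k, β g k = ∑ i, c k i * σ ((∑ j, ξ k i j * g j) + θ k i)) :
    (∀ (g : Fin m → ℝ) (k : Fin p),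
        bcoef g k = β g k • (Pi.single (ℓ k) (1 : ℝ) : Fin dout → ℝ)) ∧
    (∀ (g : Fin m → ℝ) (w : Fin p → Fin dy → ℝ) (ζ : Fin p → ℝ) (y : Fin dy → ℝ),
        (∑ k : Fin p, bcoef g k *
            (σ ((∑ d, w k d * y d) + ζ k) • (Pi.single (ℓ k) (1 : ℝ) : Fin dout → ℝ)))
          = ∑ k : Fin p, (β g k * σ ((∑ d, w k d * y d) + ζ k)) •
              (Pi.single (ℓ k) (1 : ℝ) : Fin dout → ℝ)) := by

  -- Lagrange delta property
  have hLd : ∀ a b : Fin p × Fin n, L a (γ b.1 b.2) = if a = b then 1 else 0 := by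
    intro a b
    rw [hL]
    by_cases hab : a = b
    · subst hab
      simp only [if_pos rfl]
      apply Finset.prod_eq_one
      intro x hx
      have hx' : x ≠ a := Finset.ne_of_mem_erase hx
      have hne : γ a.1 a.2 - γ x.1 x.2 ≠ 0 := by
        intro h
        apply hx'
        have h2 := hdist x.1 x.2 a.1 a.2 (by linarith)
        rw [← Prod.mk.eta (p := x), ← Prod.mk.eta (p := a)]
        exact h2
      exact div_self hne
    · simp only [if_neg hab]
      apply Finset.prod_eq_zero (i := b)
      · exact Finset.mem_erase.mpr ⟨fun h => hab h.symm, Finset.mem_univ b⟩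
      · simp
  have hργ : ∀ (s : ℝ) (k : Fin p) (i : Fin n),
      ρ s (γ k i) = σ (s + θ k i) • (Pi.single (ℓ k) (1 : ℝ) : Fin dout → ℝ) := by
    intro s k i
    rw [hρ]
    rw [Finset.sum_eq_single (k, i)]
    · rw [hLd (k,i) (k,i)]; simp
    · intro b _ hb'
      rw [hLd b (k,i)]
      simp [hb']
    · simp
  have h1 : ∀ (g : Fin m → ℝ) (k : Fin p),
      bcoef g k = β g k • (Pi.single (ℓ k) (1 : ℝ) : Fin dout → ℝ) := by
    intro g k
    rw [hb, hβ, Finset.sum_smul]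
    refine Finset.sum_congr rfl fun i _ => ?_
    rw [hργ, smul_smul]
  refine ⟨h1, ?_⟩
  intro g w ζ y
  refine Finset.sum_congr rfl fun k _ => ?_
  rw [h1]
  funext r
  by_cases hr : r = ℓ k <;> simp [Pi.single_apply, hr, mul_comm]
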